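/- arXiv:1612.03857 — 2 statements merged into one kernel-verified Lean document; each statement's English description precedes it below -/
import Mathlib

section
/- Let H be a complex Hilbert space and let A, B, C be bounded linear operators on H. If there exist bounded linear operators X and Y on H with A ∘ X + Y ∘ B = C, then N_{A*} ∘ C ∘ N_B = 0, i.e., (I − P_A) ∘ C ∘ (I − P_{B*}) = 0. -/
/-!
`I - P_A` annihilates the range of `A`, and `I - P_{B*}` maps into `(ran B*)ᗮ = ker B`.
Hence for `C = A X + Y B` both terms of `(I - P_A) C (I - P_{B*})` vanish.
-/

open ContinuousLinearMap

variable {H : Type*} [NormedAddCommGroup H] [InnerProductSpace ℂ H] [CompleteSpace H]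

/-- The orthogonal projection of `H` onto the closure of the range of `A`,
regarded as a bounded operator on `H`. -/
noncomputable def rangeProj (A : H →L[ℂ] H) : H →L[ℂ] H :=
  haveI : CompleteSpace (LinearMap.range (A : H →ₗ[ℂ] H)).topologicalClosure :=
    (Submodule.isClosed_topologicalClosure _).completeSpace_coe
  (LinearMap.range (A : H →ₗ[ℂ] H)).topologicalClosure.subtypeL ∘L
    Submodule.orthogonalProjectionOnto (LinearMap.range (A : H →ₗ[ℂ] H)).topologicalClosure

lemma rangeProj_eq_starProjection (A : H →L[ℂ] H) :
    rangeProj A = (LinearMap.range (A : H →ₗ[ℂ] H)).topologicalClosure.starProjection :=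
  rfl

lemma one_sub_rangeProj_comp_self (A : H →L[ℂ] H) : (1 - rangeProj A) ∘L A = 0 := by
  ext x
  have hx : A x ∈ (LinearMap.range (A : H →ₗ[ℂ] H)).topologicalClosure :=
    Submodule.le_topologicalClosure _ (LinearMap.mem_range_self _ x)
  simp [rangeProj_eq_starProjection, Submodule.starProjection_eq_self_iff.mpr hx]

lemma adjoint_comp_one_sub_rangeProj (A : H →L[ℂ] H) : adjoint A ∘L (1 - rangeProj A) = 0 := by
  ext x
  have hx : x - rangeProj A x ∈ (LinearMap.range (A : H →ₗ[ℂ] H))ᗮ := by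
    rw [← Submodule.orthogonal_closure, rangeProj_eq_starProjection]
    exact Submodule.sub_starProjection_mem_orthogonal x
  rw [orthogonal_range] at hx
  simpa using hx

/-- Remark 3.4: if `A X + Y B = C` is solvable, then `(I - P_A) C (I - P_{B*}) = 0`. -/
theorem stmt7 (A B C : H →L[ℂ] H)
    (h : ∃ X Y : H →L[ℂ] H, A ∘L X + Y ∘L B = C) :
    (1 - rangeProj A) ∘L C ∘L (1 - rangeProj (adjoint B)) = 0 := by
  obtain ⟨X, Y, rfl⟩ := h
  have hB : B ∘L (1 - rangeProj (adjoint B)) = 0 := by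
    simpa using adjoint_comp_one_sub_rangeProj (adjoint B)
  calc (1 - rangeProj A) ∘L (A ∘L X + Y ∘L B) ∘L (1 - rangeProj (adjoint B))
      = ((1 - rangeProj A) ∘L A) ∘L X ∘L (1 - rangeProj (adjoint B))
        + (1 - rangeProj A) ∘L Y ∘L B ∘L (1 - rangeProj (adjoint B)) := by
        simp only [add_comp, comp_add, comp_assoc]
    _ = 0 := by rw [one_sub_rangeProj_comp_self, hB]; simp
end

section
/- Let H be a complex Hilbert space and let A, B be bounded linear operators on H. Suppose there exist bounded linear operators V₁, V₂, V₃ on H such that the range of B ∘ V₁ ∘ P_{A*} + V₂ ∘ N_A is contained in the range of A, and the range of V₃* ∘ N_B − A ∘ V₁* ∘ P_{B*} is contained in the range of B. Then there exist bounded linear operators X, Y on H with A ∘ X = B ∘ V₁ ∘ P_{A*} + V₂ ∘ N_A and Y ∘ B* = N_B ∘ V₃ − P_{B*} ∘ V₁ ∘ A*, and consequently A ∘ X ∘ A* + B ∘ Y ∘ B* = 0. -/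
/-!
Both operators come from Douglas' lemma: if `range C ⊆ range A` then `C = A X` for a bounded `X`,
namely `C` followed by the inverse of `A` restricted to `(ker A)ᗮ`, which is bounded by the
closed graph theorem. Applied to the first inclusion this gives `X`; applied to the second it
gives `Z` with `B Z = V₃* N_B - A V₁* P_{B*}`, and `Y := Z*` is the second operator. Finally
`A X A* + B Y B*` vanishes because `P_{A*} A* = A*` and `B P_{B*} = B`.
-/

open ContinuousLinearMap

variable {H : Type*} [NormedAddCommGroup H] [InnerProductSpace ℂ H] [CompleteSpace H]

section Douglas

variable {𝕜 E F G : Type*} [RCLike 𝕜] [NormedAddCommGroup E] [InnerProductSpace 𝕜 E]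
  [CompleteSpace E] [NormedAddCommGroup F] [NormedSpace 𝕜 F]
  [NormedAddCommGroup G] [NormedSpace 𝕜 G] [CompleteSpace G]

theorem ContinuousLinearMap.comp_starProjection_orthogonal_ker (A : E →L[𝕜] F) :
    A ∘L (A.ker)ᗮ.starProjection = A := by
  have : CompleteSpace A.ker := A.isClosed_ker.completeSpace_coe
  ext u
  have hker : A ((A.ker).starProjection u) = 0 :=
    ((A.ker).orthogonalProjectionOnto u).2
  simp [hker]

theorem LinearMap.continuous_of_range_le_orthogonal_ker (A : E →L[𝕜] F) (X : G →ₗ[𝕜] E)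
    (hX : LinearMap.range X ≤ (A.ker)ᗮ) (hAX : Continuous (A ∘ X)) :
    Continuous X := by
  refine X.continuous_of_seq_closed_graph fun u x y hux huy => ?_
  have hy : y ∈ (A.ker)ᗮ :=
    (Submodule.isClosed_orthogonal _).mem_of_tendsto huy
      (Filter.Eventually.of_forall fun n => hX (LinearMap.mem_range_self X (u n)))
  have hAy : A y = A (X x) :=
    tendsto_nhds_unique ((A.continuous.tendsto y).comp huy) ((hAX.tendsto x).comp hux)
  have hdiff : y - X x ∈ A.ker ⊓ (A.ker)ᗮ :=
    ⟨by simp [hAy], sub_mem hy (hX (LinearMap.mem_range_self X x))⟩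
  rw [Submodule.inf_orthogonal_eq_bot, Submodule.mem_bot, sub_eq_zero] at hdiff
  exact hdiff

theorem ContinuousLinearMap.exists_comp_eq_of_range_le (A : E →L[𝕜] F) (C : G →L[𝕜] F)
    (h : LinearMap.range (C : G →ₗ[𝕜] F) ≤ LinearMap.range (A : E →ₗ[𝕜] F)) :
    ∃ X : G →L[𝕜] E, A ∘L X = C := by
  have : CompleteSpace A.ker := A.isClosed_ker.completeSpace_coe
  obtain ⟨X₀, hX₀⟩ := Module.projective_lifting_property (A : E →ₗ[𝕜] F).rangeRestrict
    ((C : G →ₗ[𝕜] F).codRestrict _ fun v => h (LinearMap.mem_range_self _ v))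
    (LinearMap.surjective_rangeRestrict _)
  set P := (A.ker)ᗮ.starProjection
  have hAP : ∀ u, A (P u) = A u :=
    ContinuousLinearMap.ext_iff.mp A.comp_starProjection_orthogonal_ker
  have hAX : (A : E →ₗ[𝕜] F) ∘ₗ (P : E →ₗ[𝕜] E) ∘ₗ X₀ = C := by
    ext v
    simp only [LinearMap.comp_apply, coe_coe, hAP]
    exact congrArg Subtype.val (LinearMap.congr_fun hX₀ v)
  have hcont : Continuous ((P : E →ₗ[𝕜] E) ∘ₗ X₀) := by
    refine LinearMap.continuous_of_range_le_orthogonal_ker A _ ?_ ?_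
    · rintro _ ⟨v, rfl⟩
      exact (A.ker)ᗮ.starProjection_apply_mem _
    · convert C.continuous using 1
      exact congrArg DFunLike.coe hAX
  exact ⟨⟨_, hcont⟩, ContinuousLinearMap.coe_injective hAX⟩

end Douglas

theorem rangeProj_comp_self (T : H →L[ℂ] H) : rangeProj T ∘L T = T := by
  have : CompleteSpace (LinearMap.range (T : H →ₗ[ℂ] H)).topologicalClosure :=
    (Submodule.isClosed_topologicalClosure _).completeSpace_coe
  ext x
  exact Submodule.starProjection_eq_self_iff.mpr
    (Submodule.le_topologicalClosure _ (LinearMap.mem_range_self _ x))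

theorem adjoint_rangeProj (T : H →L[ℂ] H) : adjoint (rangeProj T) = rangeProj T := by
  have : CompleteSpace (LinearMap.range (T : H →ₗ[ℂ] H)).topologicalClosure :=
    (Submodule.isClosed_topologicalClosure _).completeSpace_coe
  exact (isSelfAdjoint_starProjection _).adjoint_eq

theorem comp_rangeProj_adjoint (T : H →L[ℂ] H) : T ∘L rangeProj (adjoint T) = T := by
  simpa only [adjoint_comp, adjoint_adjoint, adjoint_rangeProj] using
    congrArg adjoint (rangeProj_comp_self (adjoint T))

/-- Theorem 3.6: if `range (B V₁ P_{A*} + V₂ N_A) ⊆ range A` and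
`range (V₃* N_B - A V₁* P_{B*}) ⊆ range B`, then there are `X, Y` with
`A X = B V₁ P_{A*} + V₂ N_A`, `Y B* = N_B V₃ - P_{B*} V₁ A*`, and hence
`A X A* + B Y B* = 0`. -/
theorem stmt9 (A B V₁ V₂ V₃ : H →L[ℂ] H)
    (h1 : LinearMap.range
        ((B ∘L V₁ ∘L rangeProj (adjoint A) + V₂ ∘L (1 - rangeProj (adjoint A)) : H →L[ℂ] H) : H →ₗ[ℂ] H) ≤
      LinearMap.range (A : H →ₗ[ℂ] H))
    (h2 : LinearMap.range
        ((adjoint V₃ ∘L (1 - rangeProj (adjoint B)) -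
          A ∘L adjoint V₁ ∘L rangeProj (adjoint B) : H →L[ℂ] H) : H →ₗ[ℂ] H) ≤
      LinearMap.range (B : H →ₗ[ℂ] H)) :
    ∃ X Y : H →L[ℂ] H,
      A ∘L X = B ∘L V₁ ∘L rangeProj (adjoint A) + V₂ ∘L (1 - rangeProj (adjoint A)) ∧
      Y ∘L adjoint B =
        (1 - rangeProj (adjoint B)) ∘L V₃ - rangeProj (adjoint B) ∘L V₁ ∘L adjoint A ∧
      A ∘L X ∘L adjoint A + B ∘L Y ∘L adjoint B = 0 := by
  obtain ⟨X, hX⟩ := A.exists_comp_eq_of_range_le _ h1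
  obtain ⟨Z, hZ⟩ := B.exists_comp_eq_of_range_le _ h2
  have hPA := rangeProj_comp_self (adjoint A)
  have hBQ := comp_rangeProj_adjoint B
  have hQ := adjoint_rangeProj (adjoint B)
  refine ⟨X, adjoint Z, hX, ?_⟩
  simp only [← star_eq_adjoint, ← mul_def] at *
  have hY : star Z * star B =
      (1 - rangeProj (star B)) * V₃ - rangeProj (star B) * V₁ * star A := by
    rw [← star_mul, hZ]
    simp only [star_sub, star_mul, star_star, star_one, hQ, mul_assoc]
  refine ⟨hY, ?_⟩
  rw [← mul_assoc, hX, hY]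
  simp only [mul_sub, sub_mul, add_mul, mul_one, one_mul, mul_assoc, hPA]
  simp only [← mul_assoc, hBQ]
  abel
end
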